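/- arXiv:0802.1645 — 5 statements merged into one kernel-verified Lean document; each statement's English description precedes it below -/
import Mathlib

section
/- Let p ≥ 5 be prime and let k be an odd integer with 3 ≤ k ≤ p−2. Then the sum over n from 1 to p−2 of (1 + n^k − (1+n)^k)·n^{−1} (where n^{−1} denotes the inverse of n modulo p) is congruent to k modulo p. -/
open Finset

lemma sum_cast_pow_aux (p : ℕ) [NeZero p] (m : ℕ) :
    ∑ n ∈ Finset.range p, (n : ZMod p) ^ m = ∑ x : ZMod p, x ^ m :=
  Finset.sum_nbij' (fun n => ((n : ZMod p))) (fun x => x.val)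
    (fun n _ => Finset.mem_univ _)
    (fun x _ => Finset.mem_range.mpr (ZMod.val_lt x))
    (fun n hn => ZMod.val_cast_of_lt (Finset.mem_range.mp hn))
    (fun x _ => ZMod.natCast_rightInverse x)
    (fun n _ => rfl)

lemma inner_sum_aux (p : ℕ) [Fact p.Prime] (hp5 : 5 ≤ p) (m : ℕ) (hm : m < p - 1) :
    ∑ n ∈ Finset.Icc 1 (p - 2), (n : ZMod p) ^ m
      = -(-1 : ZMod p) ^ m - (if m = 0 then 1 else 0) := by
  have hcard : Fintype.card (ZMod p) = p := ZMod.card p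
  have htot : ∑ x : ZMod p, x ^ m = 0 := by
    apply FiniteField.sum_pow_lt_card_sub_one
    rw [hcard]; exact hm
  have h1 : ∑ n ∈ Finset.range p, (n : ZMod p) ^ m = 0 := by
    rw [sum_cast_pow_aux]; exact htot
  have hsplit0 : Finset.range p = insert 0 (Finset.Icc 1 (p - 1)) := by
    ext n
    simp only [Finset.mem_range, Finset.mem_insert, Finset.mem_Icc]
    omega
  have hsplit1 : Finset.Icc 1 (p - 1) = insert (p - 1) (Finset.Icc 1 (p - 2)) := by
    ext n
    simp only [Finset.mem_insert, Finset.mem_Icc]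
    omega
  have h0notin : (0 : ℕ) ∉ Finset.Icc 1 (p - 1) := by simp
  have hpnotin : p - 1 ∉ Finset.Icc 1 (p - 2) := by
    simp only [Finset.mem_Icc]; omega
  rw [hsplit0, Finset.sum_insert h0notin, hsplit1, Finset.sum_insert hpnotin] at h1
  have hcast : ((p - 1 : ℕ) : ZMod p) = -1 := by
    have hz : ((p : ℕ) : ZMod p) = 0 := ZMod.natCast_self p
    push_cast [Nat.cast_sub (by omega : 1 ≤ p)]
    rw [hz]; ring
  rw [hcast] at h1
  have h00 : ((0 : ℕ) : ZMod p) ^ m = if m = 0 then 1 else 0 := by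
    rcases Nat.eq_zero_or_pos m with h | h
    · simp [h]
    · rw [if_neg (by omega : m ≠ 0), Nat.cast_zero, zero_pow (by omega : m ≠ 0)]
  rw [h00] at h1
  linear_combination h1

lemma alt_sum_aux (k : ℕ) (hk_odd : Odd k) (hk3 : 3 ≤ k) :
    ∑ i ∈ Finset.range (k - 1), ((-1 : ℤ) ^ i * (Nat.choose k (1 + i) : ℤ)) = 0 := by
  have h := Int.alternating_sum_range_choose (n := k)
  rw [if_neg (by omega : k ≠ 0), Finset.sum_range_succ, Nat.choose_self,
    Odd.neg_one_pow hk_odd] at h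
  have hk1 : k = (k - 1) + 1 := by omega
  rw [hk1, Finset.sum_range_succ', ← hk1] at h
  simp only [pow_zero, Nat.choose_zero_right, Nat.cast_one, one_mul, mul_one] at h
  have hswap : ∑ i ∈ Finset.range (k - 1), ((-1:ℤ)^i * (Nat.choose k (1+i) : ℤ))
      = -∑ i ∈ Finset.range (k - 1), ((-1:ℤ)^(i+1) * (Nat.choose k (i+1) : ℤ)) := by
    rw [← Finset.sum_neg_distrib]
    exact Finset.sum_congr rfl fun i _ => by rw [add_comm 1 i]; ring
  rw [hswap]
  linarith

/-- Let `p ≥ 5` be prime and `k` odd with `3 ≤ k ≤ p − 2`. Then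
`∑_{n=1}^{p−2} (1 + n^k − (1+n)^k) · n⁻¹ ≡ k (mod p)`, the inverse and the
congruence being taken in `ℤ/pℤ`. -/
theorem stmt_0 (p : ℕ) [Fact p.Prime] (hp5 : 5 ≤ p)
    (k : ℕ) (hk_odd : Odd k) (hk3 : 3 ≤ k) (hk : k ≤ p - 2) :
    ∑ n ∈ Finset.Icc 1 (p - 2),
      (1 + (n : ZMod p) ^ k - (1 + (n : ZMod p)) ^ k) * (n : ZMod p)⁻¹
      = (k : ZMod p) := by
  have hkp : k - 1 ≤ p - 3 := by omega
  have key : ∀ n ∈ Finset.Icc 1 (p - 2),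
      (1 + (n : ZMod p) ^ k - (1 + (n : ZMod p)) ^ k) * (n : ZMod p)⁻¹
      = ∑ i ∈ Finset.range (k - 1), -((Nat.choose k (1 + i) : ZMod p) * (n : ZMod p) ^ i) := by
    intro n hn
    simp only [Finset.mem_Icc] at hn
    set c : ZMod p := (n : ZMod p) with hc
    have hc0 : c ≠ 0 := by
      rw [hc, Ne, ZMod.natCast_eq_zero_iff]
      intro hdvd
      have := Nat.le_of_dvd (by omega) hdvd
      omega
    have hbin : (1 + c) ^ k
        = 1 + c ^ k + ∑ i ∈ Finset.range (k - 1), (Nat.choose k (1 + i) : ZMod p) * c ^ (i + 1) := by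
      rw [add_comm (1 : ZMod p) c, add_pow, Finset.sum_range_succ]
      have hk1 : k = (k - 1) + 1 := by omega
      rw [hk1, Finset.sum_range_succ', ← hk1]
      rw [Nat.choose_self]
      simp only [pow_zero, Nat.choose_zero_right, Nat.cast_one, one_mul, mul_one, one_pow]
      have : ∀ i ∈ Finset.range (k - 1),
          c ^ (i + 1) * (Nat.choose k (i + 1) : ZMod p)
          = (Nat.choose k (1 + i) : ZMod p) * c ^ (i + 1) := by
        intro i _
        rw [add_comm 1 i]; ring
      rw [Finset.sum_congr rfl this]
      ring
    have hnum : 1 + c ^ k - (1 + c) ^ k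
        = (∑ i ∈ Finset.range (k - 1), -((Nat.choose k (1 + i) : ZMod p) * c ^ i)) * c := by
      rw [Finset.sum_mul]
      have : ∀ i ∈ Finset.range (k - 1),
          -((Nat.choose k (1 + i) : ZMod p) * c ^ i) * c
          = -((Nat.choose k (1 + i) : ZMod p) * c ^ (i + 1)) := by
        intro i _; ring
      rw [Finset.sum_congr rfl this, Finset.sum_neg_distrib]
      linear_combination -hbin
    rw [hnum, mul_assoc, mul_inv_cancel₀ hc0, mul_one]
  rw [Finset.sum_congr rfl key, Finset.sum_comm]
  have step2 : ∀ i ∈ Finset.range (k - 1),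
      ∑ n ∈ Finset.Icc 1 (p - 2), -((Nat.choose k (1 + i) : ZMod p) * (n : ZMod p) ^ i)
      = (Nat.choose k (1 + i) : ZMod p) * (-1) ^ i
        + (Nat.choose k (1 + i) : ZMod p) * (if i = 0 then 1 else 0) := by
    intro i hi
    rw [Finset.sum_neg_distrib, ← Finset.mul_sum,
      inner_sum_aux p hp5 i (by simp only [Finset.mem_range] at hi; omega)]
    ring
  rw [Finset.sum_congr rfl step2, Finset.sum_add_distrib]
  have hfirst : ∑ i ∈ Finset.range (k - 1), (Nat.choose k (1 + i) : ZMod p) * (-1) ^ i = 0 := by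
    have h := alt_sum_aux k hk_odd hk3
    have h2 := congrArg (fun z : ℤ => (z : ZMod p)) h
    push_cast at h2
    rw [← h2]
    exact Finset.sum_congr rfl fun i _ => by ring
  have hsecond : ∑ i ∈ Finset.range (k - 1),
      (Nat.choose k (1 + i) : ZMod p) * (if i = 0 then 1 else 0) = (k : ZMod p) := by
    have : ∀ i ∈ Finset.range (k - 1),
        (Nat.choose k (1 + i) : ZMod p) * (if i = 0 then 1 else 0)
        = if i = 0 then (Nat.choose k (1 + i) : ZMod p) else 0 := by
      intro i _; split <;> simp
    rw [Finset.sum_congr rfl this, Finset.sum_ite_eq' (Finset.range (k - 1)) 0]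
    rw [if_pos (Finset.mem_range.mpr (by omega))]
    simp [Nat.choose_one_right]
  rw [hfirst, hsecond, zero_add]
end

section
/- Let p ≥ 5 be prime and P a prime of ℤ[ζ_p] above ℓ ≠ p. The Gauss sum τ(P) = τ_1(P) satisfies τ(P) ≡ 1 (mod π), where π = ζ_p − 1. Consequently, every Jacobi sum j_{a,b}(P) with a+b ≢ 0 mod p, a,b ≢ 0, lies in U = 1 + π²ℤ_p[ζ_p], i.e., j_{a,b}(P) ≡ 1 (mod π²). -/
/-- Let `p ≥ 5` and `ℓ ≠ p` be primes and `P` a prime of `ℤ[ζ_p]` above `ℓ`,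
with residue field modeled by a finite field `F` of characteristic `ℓ`.  Work
in an integral domain `R` (e.g. the ring of integers of `ℚ_p(ζ_p, ζ_ℓ)`)
containing a primitive `p`-th root of unity `ζ`, with `π = ζ − 1`; `χ_P` is
modeled by a multiplicative character `χ` of exact order `p` whose nonzero
values are powers of `ζ`, and `α ↦ ζ_ℓ^{Tr α}` by a primitive additive
character `ψ`.  Then the Gauss sum `τ(P) = −gaussSum χ ψ` satisfies
`τ(P) ≡ 1 (mod π)`, and every Jacobi sum `j_{a,b}(P) = −jacobiSum (χ^a) (χ^b)`
with `a, b, a+b ≢ 0 (mod p)` satisfies `j_{a,b}(P) ≡ 1 (mod π²)`. -/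
theorem stmt_6 (p ℓ : ℕ) (hp : p.Prime) (hp5 : 5 ≤ p) (hℓ : ℓ.Prime) (hℓp : ℓ ≠ p)
    (F : Type*) [Field F] [Fintype F] (hchar : ringChar F = ℓ)
    (R : Type*) [CommRing R] [IsDomain R]
    (ζ : R) (hζ : IsPrimitiveRoot ζ p)
    (χ : MulChar F R) (hχ : orderOf χ = p)
    (hχval : ∀ x : Fˣ, ∃ k : ℕ, χ (x : F) = ζ ^ k)
    (ψ : AddChar F R) (hψ : ψ.IsPrimitive) :
    ((ζ - 1) ∣ (-(gaussSum χ ψ) - 1)) ∧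
    (∀ a b : ℕ, ¬ p ∣ a → ¬ p ∣ b → ¬ p ∣ (a + b) →
      (ζ - 1) ^ 2 ∣ (-(jacobiSum (χ ^ a) (χ ^ b)) - 1)) := by
  classical
  constructor
  · -- Gauss sum part
    have hψ1 : ψ ≠ 1 := by
      have := hψ (one_ne_zero (α := F))
      rwa [AddChar.mulShift_one] at this
    have hsum : ∑ x : F, ψ x = 0 := AddChar.sum_eq_zero_of_ne_one hψ1
    have key : (ζ - 1) ∣ gaussSum χ ψ + 1 := by
      have hg : gaussSum χ ψ + 1 = ∑ x ∈ Finset.univ \ {(0 : F)}, (χ x - 1) * ψ x := by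
        have h0 : (χ (0 : F)) = 0 := by
          simpa using χ.map_nonunit (by simp : ¬ IsUnit (0 : F))
        have : ∑ x ∈ Finset.univ \ {(0 : F)}, (χ x - 1) * ψ x
            = ∑ x : F, (χ x - 1) * ψ x - (χ 0 - 1) * ψ 0 := by
          rw [Finset.sum_sdiff_eq_sub (Finset.subset_univ _), Finset.sum_singleton]
        rw [this, h0, gaussSum]
        simp only [sub_mul, Finset.sum_sub_distrib, one_mul]
        rw [hsum, AddChar.map_zero_eq_one]
        ring
      rw [hg]
      apply Finset.dvd_sum
      intro x hx
      have hx0 : x ≠ 0 := by simpa using (Finset.mem_sdiff.mp hx).2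
      obtain ⟨k, hk⟩ := hχval (Units.mk0 x hx0)
      simp only [Units.val_mk0] at hk
      rw [hk]
      exact Dvd.dvd.mul_right (by simpa using sub_dvd_pow_sub_pow ζ 1 k) _
    have : -(gaussSum χ ψ) - 1 = -(gaussSum χ ψ + 1) := by ring
    rw [this]
    exact key.neg_right
  · intro a b ha hb hab
    have hn : 2 < p := by omega
    have hχp : χ ^ p = 1 := by rw [← hχ]; exact pow_orderOf_eq_one χ
    have hca : (χ ^ a) ^ p = 1 := by
      rw [← pow_mul, mul_comm, pow_mul, hχp, one_pow]
    have hcb : (χ ^ b) ^ p = 1 := by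
      rw [← pow_mul, mul_comm, pow_mul, hχp, one_pow]
    have hn' : p ∣ Fintype.card F - 1 := hχ ▸ χ.orderOf_dvd_card_sub_one
    obtain ⟨z, hz, hjz⟩ := exists_jacobiSum_eq_neg_one_add hn hca hcb hn' hζ
    refine ⟨-z, ?_⟩
    rw [hjz]
    ring
end

section
/- Let p ≥ 5 be prime with p ≡ 1 (mod 3), let a ∈ {1,…,p−2} with a² + a + 1 ≡ 0 (mod p), let ℓ ≡ 1 (mod p) be prime and P a prime of ℤ[ζ_p] above ℓ. Then for every σ ∈ Gal(ℚ(ζ_p)/ℚ) with ω³(σ) = 1, and every odd character ψ of Gal(ℚ(ζ_p)/ℚ), one has (ψ(σ) − 1)(1 + ψ(a) − ψ(1+a)) = 0; equivalently, the Jacobi sum j_{1,a}(P) is fixed by the subgroup {σ : ω³(σ) = 1}, so ℚ(j_{1,a}(P)) ≠ ℚ(ζ_p). -/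
/-- Let `p ≥ 5` be prime with `p ≡ 1 (mod 3)` and let `a ∈ {1,…,p−2}` satisfy
`a² + a + 1 ≡ 0 (mod p)`.  Identifying `Gal(ℚ(ζ_p)/ℚ)` with `(ℤ/pℤ)*` via the
Teichmüller character (so that `ω³(σ) = 1` means `σ³ = 1`), for every `σ` with
`σ³ = 1` and every odd Dirichlet character `ψ` mod `p` one has
`(ψ(σ) − 1)·(1 + ψ(a) − ψ(1+a)) = 0`  (which is what it means for the Jacobi
sum `j_{1,a}(P)` to be fixed by the subgroup `{σ : ω³(σ) = 1}`, so that
`ℚ(j_{1,a}(P)) ≠ ℚ(ζ_p)`). -/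
theorem stmt_9 (p : ℕ) [Fact p.Prime] (hp5 : 5 ≤ p) (hp3 : p % 3 = 1)
    (a : ℕ) (ha1 : 1 ≤ a) (ha2 : a ≤ p - 2)
    (ha : ((a : ZMod p)) ^ 2 + (a : ZMod p) + 1 = 0)
    (σ : (ZMod p)ˣ) (hσ : σ ^ 3 = 1)
    (ψ : DirichletCharacter ℂ p) (hψ : ψ (-1) = -1) :
    (ψ ((σ : ZMod p)) - 1) * (1 + ψ ((a : ZMod p)) - ψ (1 + (a : ZMod p))) = 0 := by
  set A : ZMod p := (a : ZMod p) with hA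
  have hA3 : A ^ 3 = 1 := by linear_combination (A - 1) * ha
  -- rewrite 1 + A as (-1) * A^2
  have h1a : (1 + A) = (-1) * A ^ 2 := by linear_combination ha
  have hψ1a : ψ (1 + A) = -(ψ A) ^ 2 := by
    rw [h1a, map_mul, hψ, map_pow]; ring
  set t : ℂ := ψ A with ht
  have ht3 : t ^ 3 = 1 := by rw [ht, ← map_pow, hA3, map_one]
  rw [hψ1a]
  by_cases h1 : t = 1
  · -- then ψ σ = 1 since σ ∈ {1, A, A²}
    have hs3 : ((σ : ZMod p)) ^ 3 = 1 := by
      have := congrArg (Units.val) hσ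
      simpa using this
    set S : ZMod p := (σ : ZMod p) with hS
    have hfac : (S - 1) * ((S - A) * (S - A ^ 2)) = 0 := by
      have hsum : A + A ^ 2 = -1 := by linear_combination ha
      linear_combination hs3 + (S - S ^ 2) * hsum + (S - 1) * hA3
    have hψS : ψ S = 1 := by
      rcases mul_eq_zero.mp hfac with h | h
      · rw [sub_eq_zero.mp h, map_one]
      · rcases mul_eq_zero.mp h with h | h
        · rw [sub_eq_zero.mp h, ← ht, h1]
        · rw [sub_eq_zero.mp h, map_pow, ← ht, h1, one_pow]
    rw [hψS]; ring
  · have : (t - 1) * (1 + t + t ^ 2) = 0 := by linear_combination ht3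
    have h2 : 1 + t + t ^ 2 = 0 := by
      rcases mul_eq_zero.mp this with h | h
      · exact absurd (sub_eq_zero.mp h) h1
      · exact h
    linear_combination (ψ ((σ : ZMod p)) - 1) * h2
end

section
/- Let p ≥ 5 be prime and for a Dirichlet character ρ mod p let τ(ρ) = Σ_{a=1}^{p−1} ρ(a)ζ_p^a ∈ ℤ_p[ζ_p] (Gauss sum with values in ℤ_p). If ρ = ω^k with 0 ≤ k ≤ p−2, where ω is the Teichmüller character, then the p-adic valuation v_p(τ(ρ^{−1})) = k/(p−1), where v_p is normalized so that v_p(p) = 1. -/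
open Finset

namespace Stmt13Aux

variable {p : ℕ} [hpF : Fact p.Prime]

lemma sum_units_pow (e : ℕ) :
    (∑ a : (ZMod p)ˣ, ((a : ZMod p)) ^ e) = if (p - 1) ∣ e then (-1 : ZMod p) else 0 := by
  classical
  have := FiniteField.sum_pow_units (ZMod p) e
  rw [ZMod.card] at this
  simpa using this

lemma sum_A (j : ℕ) : ∀ e : ℕ, (∀ m, e ≤ m → m ≤ e + j → ¬ (p - 1) ∣ m) →
    (∑ a : (ZMod p)ˣ, (a : ZMod p) ^ e * ∏ i ∈ range j, ((a : ZMod p) - (i : ZMod p))) = 0 := by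
  induction j with
  | zero =>
      intro e h
      simp only [range_zero, prod_empty, mul_one]
      rw [sum_units_pow, if_neg (h e le_rfl (by omega))]
  | succ j ih =>
      intro e h
      have expand : ∀ a : (ZMod p)ˣ,
          (a : ZMod p) ^ e * ∏ i ∈ range (j+1), ((a : ZMod p) - (i : ZMod p))
          = (a : ZMod p) ^ (e+1) * ∏ i ∈ range j, ((a : ZMod p) - (i : ZMod p))
            - (j : ZMod p) * ((a : ZMod p) ^ e * ∏ i ∈ range j, ((a : ZMod p) - (i : ZMod p))) := by
        intro a; rw [prod_range_succ]; ring
      rw [Finset.sum_congr rfl fun a _ => expand a, Finset.sum_sub_distrib, ← Finset.mul_sum]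
      rw [ih (e+1) (fun m h1 h2 => h m (by omega) (by omega)),
        ih e (fun m h1 h2 => h m h1 (by omega))]
      ring

lemma sum_B (j : ℕ) : ∀ e : ℕ, (p - 1) ∣ (e + j) → (∀ m, e ≤ m → m < e + j → ¬ (p - 1) ∣ m) →
    (∑ a : (ZMod p)ˣ, (a : ZMod p) ^ e * ∏ i ∈ range j, ((a : ZMod p) - (i : ZMod p))) = -1 := by
  induction j with
  | zero =>
      intro e hd h
      simp only [range_zero, prod_empty, mul_one]
      rw [sum_units_pow, if_pos (by simpa using hd)]
  | succ j ih =>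
      intro e hd h
      have expand : ∀ a : (ZMod p)ˣ,
          (a : ZMod p) ^ e * ∏ i ∈ range (j+1), ((a : ZMod p) - (i : ZMod p))
          = (a : ZMod p) ^ (e+1) * ∏ i ∈ range j, ((a : ZMod p) - (i : ZMod p))
            - (j : ZMod p) * ((a : ZMod p) ^ e * ∏ i ∈ range j, ((a : ZMod p) - (i : ZMod p))) := by
        intro a; rw [prod_range_succ]; ring
      rw [Finset.sum_congr rfl fun a _ => expand a, Finset.sum_sub_distrib, ← Finset.mul_sum]
      have hd' : (p - 1) ∣ (e + 1 + j) := by rwa [show e + 1 + j = e + (j+1) by omega]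
      rw [ih (e+1) hd' (fun m h1 h2 => h m (by omega) (by omega)),
        sum_A j e (fun m h1 h2 => h m h1 (by omega))]
      ring

lemma desc_cast (n j : ℕ) :
    ((n.descFactorial j : ℕ) : ZMod p) = ∏ i ∈ range j, ((n : ZMod p) - (i : ZMod p)) := by
  rcases le_or_gt j n with h | h
  · rw [Nat.descFactorial_eq_prod_range, Nat.cast_prod]
    refine prod_congr rfl fun i hi => ?_
    have hi' : i < j := Finset.mem_range.mp hi
    have : i ≤ n := by omega
    push_cast [Nat.cast_sub this]; ring
  · rw [Nat.descFactorial_eq_zero_iff_lt.mpr h, Nat.cast_zero]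
    exact (Finset.prod_eq_zero (Finset.mem_range.mpr h) (by simp)).symm


section Padic

variable (ω : (ZMod p)ˣ →* ℤ_[p]ˣ)

noncomputable def cc (k j : ℕ) : ℤ_[p] :=
  ∑ a : (ZMod p)ˣ, (((ω a)⁻¹ ^ k : ℤ_[p]ˣ) : ℤ_[p]) * ((a : ZMod p).val.choose j : ℤ_[p])

variable (hω : ∀ a : (ZMod p)ˣ, PadicInt.toZMod ((ω a : ℤ_[p])) = (a : ZMod p))

include hω

lemma toZMod_cc (k j : ℕ) (hk : k ≤ p - 1) :
    PadicInt.toZMod (cc ω k j)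
      = ∑ a : (ZMod p)ˣ, (a : ZMod p) ^ (p - 1 - k) * ((a : ZMod p).val.choose j : ZMod p) := by
  rw [cc, map_sum]
  refine Finset.sum_congr rfl fun a _ => ?_
  rw [map_mul, map_natCast]
  congr 1
  have hane : ((a : ZMod p)) ≠ 0 := a.ne_zero
  have hmul : ((ω a : ℤ_[p])) * (((ω a)⁻¹ : ℤ_[p]ˣ) : ℤ_[p]) = 1 := by
    rw [← Units.val_mul, mul_inv_cancel, Units.val_one]
  have hinv : PadicInt.toZMod (((ω a)⁻¹ : ℤ_[p]ˣ) : ℤ_[p]) = (a : ZMod p)⁻¹ := by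
    have := congrArg PadicInt.toZMod hmul
    rw [map_mul, map_one, hω a] at this
    exact eq_inv_of_mul_eq_one_left (by rw [mul_comm]; exact this)
  rw [Units.val_pow_eq_pow_val, map_pow, hinv, inv_pow]
  refine inv_eq_of_mul_eq_one_right ?_
  rw [← pow_add, show k + (p - 1 - k) = p - 1 by omega]
  exact ZMod.pow_card_sub_one_eq_one hane

lemma factorial_mul_toZMod_cc (k j : ℕ) (hk : k ≤ p - 1) :
    ((j.factorial : ZMod p)) * PadicInt.toZMod (cc ω k j)
      = ∑ a : (ZMod p)ˣ, (a : ZMod p) ^ (p - 1 - k)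
          * ∏ i ∈ range j, ((a : ZMod p) - (i : ZMod p)) := by
  rw [toZMod_cc ω hω k j hk, Finset.mul_sum]
  refine Finset.sum_congr rfl fun a _ => ?_
  rw [← mul_assoc, mul_comm ((j.factorial : ZMod p)) _, mul_assoc]
  congr 1
  rw [← Nat.cast_mul, ← Nat.descFactorial_eq_factorial_mul_choose, desc_cast]
  simp [ZMod.natCast_val, ZMod.cast_id]

lemma cc_low_dvd (k j : ℕ) (hj : j < k) (hk : k ≤ p - 2) :
    (p : ℤ_[p]) ∣ cc ω k j := by
  have hp2 : 2 ≤ p := hpF.out.two_le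
  have h0 : ((j.factorial : ZMod p)) * PadicInt.toZMod (cc ω k j) = 0 := by
    rw [factorial_mul_toZMod_cc ω hω k j (by omega),
      sum_A j (p - 1 - k) (fun m h1 h2 hdvd =>
        absurd (Nat.le_of_dvd (by omega) hdvd) (by omega))]
  have hfac : ((j.factorial : ZMod p)) ≠ 0 := by
    rw [Ne, ZMod.natCast_eq_zero_iff]
    intro hdvd
    have := (Nat.Prime.dvd_factorial hpF.out).mp hdvd
    omega
  have hz : PadicInt.toZMod (cc ω k j) = 0 := by
    rcases mul_eq_zero.mp h0 with h | h
    · exact absurd h hfac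
    · exact h
  have : cc ω k j ∈ RingHom.ker (PadicInt.toZMod : ℤ_[p] →+* ZMod p) := hz
  rw [PadicInt.ker_toZMod, PadicInt.maximalIdeal_eq_span_p] at this
  exact Ideal.mem_span_singleton.mp this

lemma cc_diag_unit (k : ℕ) (hk : k ≤ p - 2) : IsUnit (cc ω k k) := by
  have hp2 : 2 ≤ p := hpF.out.two_le
  have h1 : ((k.factorial : ZMod p)) * PadicInt.toZMod (cc ω k k) = -1 := by
    rw [factorial_mul_toZMod_cc ω hω k k (by omega)]
    refine sum_B k (p - 1 - k) (by rw [show p - 1 - k + k = p - 1 by omega]) ?_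
    exact fun m h1 h2 hdvd => absurd (Nat.le_of_dvd (by omega) hdvd) (by omega)
  have hz : PadicInt.toZMod (cc ω k k) ≠ 0 := by
    intro h
    rw [h, mul_zero] at h1
    exact (by norm_num : (0 : ZMod p) ≠ -1) h1
  by_contra h
  have : cc ω k k ∈ IsLocalRing.maximalIdeal ℤ_[p] := by
    rwa [IsLocalRing.mem_maximalIdeal]
  rw [← PadicInt.ker_toZMod] at this
  exact hz this

end Padic


lemma isUnit_of_padic {K : Type*} [Field K] (O : Subring K) (f : ℤ_[p] →+* O)
    (hf : f.IsIntegral) (π : O) (hdvd : (p : O) ∣ π ^ (p - 1))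
    (c : ℤ_[p]) (hc : IsUnit c) (b : O) : IsUnit (f c + π * b) := by
  by_contra h
  obtain ⟨M, hM, hmem⟩ := exists_max_ideal_of_mem_nonunits (mem_nonunits_iff.mpr h)
  have hPmax : (M.comap f).IsMaximal :=
    Ideal.isMaximal_comap_of_isIntegral_of_isMaximal' f hf M
  have hP : M.comap f = IsLocalRing.maximalIdeal ℤ_[p] := IsLocalRing.eq_maximalIdeal hPmax
  have hpM : (p : O) ∈ M := by
    have hmem' : (p : ℤ_[p]) ∈ M.comap f := by
      rw [hP, PadicInt.maximalIdeal_eq_span_p]; exact Ideal.mem_span_singleton_self _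
    rw [Ideal.mem_comap, map_natCast] at hmem'
    exact hmem'
  have hπM : π ∈ M := by
    refine hM.isPrime.mem_of_pow_mem (p - 1) ?_
    obtain ⟨t, ht⟩ := hdvd
    rw [ht]
    exact Ideal.mul_mem_right _ _ hpM
  have hcM : f c ∈ M := by
    have he : f c = (f c + π * b) - π * b := by ring
    rw [he]
    exact Ideal.sub_mem _ hmem (Ideal.mul_mem_right _ _ hπM)
  exact hM.ne_top (M.eq_top_of_isUnit_mem hcM (hc.map f))

end Stmt13Aux

open Stmt13Aux

/-- Let `p ≥ 5` be prime, `K = ℚ_p(ζ_p)`, `O = ℤ_p[ζ_p]` its ring of integers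
(the subring generated by `ℤ_p` and `ζ_p`), and `ω` the Teichmüller character.
For `ρ = ω^k` with `0 ≤ k ≤ p − 2`, the Gauss sum
`τ(ρ⁻¹) = Σ_{a=1}^{p−1} ρ⁻¹(a) ζ_p^a ∈ ℤ_p[ζ_p]` has `p`-adic valuation
`k/(p−1)`; equivalently (since `v_p(ζ_p − 1) = 1/(p−1)` and the units of the
local ring `O` are exactly its valuation-zero elements),
`τ(ρ⁻¹) = (ζ_p − 1)^k · u` for a unit `u` of `O`. -/
theorem stmt_13 (p : ℕ) [hpF : Fact p.Prime] (hp5 : 5 ≤ p)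
    (K : Type*) [Field K] [Algebra ℚ_[p] K]
    [IsCyclotomicExtension {p} ℚ_[p] K]
    (ζ : K) (hζ : IsPrimitiveRoot ζ p)
    (O : Subring K)
    (hO : O = Subring.closure
      (insert ζ (Set.range (fun a : ℤ_[p] => algebraMap ℚ_[p] K (a : ℚ_[p])))))
    (ω : (ZMod p)ˣ →* ℤ_[p]ˣ)
    (hω : ∀ a : (ZMod p)ˣ, PadicInt.toZMod ((ω a : ℤ_[p])) = (a : ZMod p))
    (k : ℕ) (hk : k ≤ p - 2) :
    ∃ u : Oˣ,
      (∑ a : (ZMod p)ˣ,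
          algebraMap ℚ_[p] K ((((ω a)⁻¹ ^ k : ℤ_[p]ˣ) : ℤ_[p]) : ℚ_[p])
            * ζ ^ ((a : ZMod p).val))
        = (ζ - 1) ^ k * ((u : O) : K) := by
  classical
  have hp2 : 2 ≤ p := hpF.out.two_le
  haveI : NeZero p := ⟨hpF.out.ne_zero⟩
  set π : K := ζ - 1 with hπdef
  -- membership facts
  have hζO : ζ ∈ O := hO ▸ Subring.subset_closure (Set.mem_insert _ _)
  have hgO : ∀ a : ℤ_[p], algebraMap ℚ_[p] K (a : ℚ_[p]) ∈ O := fun a =>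
    hO ▸ Subring.subset_closure (Set.mem_insert_of_mem _ ⟨a, rfl⟩)
  have hπO : π ∈ O := O.sub_mem hζO O.one_mem
  -- ring homs
  set g : ℤ_[p] →+* K := (algebraMap ℚ_[p] K).comp ((PadicInt.Coe.ringHom (p := p))) with hgdef
  have hgval : ∀ a : ℤ_[p], g a = algebraMap ℚ_[p] K (a : ℚ_[p]) := fun a => rfl
  set f : ℤ_[p] →+* O := g.codRestrict O (fun a => hgO a) with hfdef
  have hfval : ∀ a : ℤ_[p], ((f a : O) : K) = g a := fun a => rfl
  -- integrality
  have hf : f.IsIntegral := by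
    intro x
    have hx : (x : K) ∈ Subring.closure
        (insert ζ (Set.range (fun a : ℤ_[p] => algebraMap ℚ_[p] K (a : ℚ_[p])))) := by
      rw [← hO]; exact x.2
    have hint : g.IsIntegralElem (x : K) := by
      refine IsIntegral.of_mem_closure'' _ ?_ _ hx
      rintro y (rfl | ⟨a, rfl⟩)
      · refine ⟨Polynomial.X ^ p - Polynomial.C 1,
          Polynomial.monic_X_pow_sub_C 1 (by omega), ?_⟩
        simp [Polynomial.eval₂_sub, hζ.pow_eq_one]
      · exact g.isIntegralElem_map
    obtain ⟨q, hq, h0⟩ := hint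
    refine ⟨q, hq, ?_⟩
    apply Subtype.ext
    have hcomp : O.subtype.comp f = g := RingHom.ext fun a => rfl
    have h2 := Polynomial.hom_eval₂ q f O.subtype (x : O)
    rw [hcomp] at h2
    show O.subtype (Polynomial.eval₂ f x q) = _
    rw [h2]
    simpa using h0
  -- key identity: p * (1 + pi * E) = -pi^(p-1)
  have hπne : π ≠ 0 := sub_ne_zero.mpr (hζ.ne_one (by omega))
  have hexp : ∑ j ∈ Finset.range (p+1), π ^ j * (p.choose j : K) = 1 := by
    have h1 : (π + 1) ^ p = 1 := by
      rw [show π + 1 = ζ from by rw [hπdef]; ring, hζ.pow_eq_one]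
    rw [add_pow] at h1
    simpa using h1
  have hS0 : ∑ j ∈ Finset.range p, π ^ j * (p.choose (j+1) : K) = 0 := by
    have h2 := Finset.sum_range_succ' (fun j => π ^ j * (p.choose j : K)) p
    rw [hexp] at h2
    simp only [pow_zero, Nat.choose_zero_right, Nat.cast_one, mul_one] at h2
    have h3 : π * ∑ j ∈ Finset.range p, π ^ j * (p.choose (j+1) : K) = 0 := by
      rw [Finset.mul_sum]
      have h4 : ∀ j ∈ Finset.range p,
          π * (π ^ j * (p.choose (j+1) : K)) = π ^ (j+1) * (p.choose (j+1) : K) := by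
        intro j _; ring
      rw [Finset.sum_congr rfl h4]
      linear_combination -h2
    rcases mul_eq_zero.mp h3 with h | h
    · exact absurd h hπne
    · exact h
  set E : K := ∑ j ∈ Finset.range (p-2), ((p.choose (j+2) / p : ℕ) : K) * π ^ j with hEdef
  have hEO : E ∈ O :=
    O.sum_mem fun j _ => O.mul_mem (natCast_mem O _) (O.pow_mem hπO j)
  have hsplit0 : ∑ j ∈ Finset.range p, π ^ j * (p.choose (j+1) : K)
      = ((∑ j ∈ Finset.range (p-2), π ^ (j+1) * (p.choose (j+2) : K)) + (p : K)) + π^(p-1) := by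
    calc ∑ j ∈ Finset.range p, π ^ j * (p.choose (j+1) : K)
        = ∑ j ∈ Finset.range ((p-1)+1), π ^ j * (p.choose (j+1) : K) := by
          rw [show (p-1)+1 = p from by omega]
      _ = (∑ j ∈ Finset.range (p-1), π ^ j * (p.choose (j+1) : K))
            + π ^ (p-1) * (p.choose ((p-1)+1) : K) := Finset.sum_range_succ _ _
      _ = ((∑ j ∈ Finset.range (p-2), π ^ (j+1) * (p.choose (j+2) : K)) + (p:K)) + π^(p-1) := by
          rw [show p-1 = (p-2)+1 from by omega,
            Finset.sum_range_succ' (fun j => π ^ j * (p.choose (j+1) : K)) (p-2)]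
          rw [show (p-2)+1 = p-1 from by omega, show (p-1)+1 = p from by omega]
          simp [Nat.choose_self, Nat.choose_one_right]
  have hmid : ∑ j ∈ Finset.range (p-2), π ^ (j+1) * (p.choose (j+2) : K) = (p:K) * (π * E) := by
    rw [hEdef, Finset.mul_sum, Finset.mul_sum]
    refine Finset.sum_congr rfl fun j hj => ?_
    have hj' : j < p - 2 := Finset.mem_range.mp hj
    have hdvd : p ∣ p.choose (j+2) := Nat.Prime.dvd_choose_self hpF.out (by omega) (by omega)
    rw [show (p.choose (j+2) : K) = ((p * (p.choose (j+2) / p) : ℕ) : K) from by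
      rw [Nat.mul_div_cancel' hdvd]]
    push_cast
    ring
  have h4 := hsplit0.symm.trans hS0
  rw [hmid] at h4
  have hkey : (p:K) * (1 + π * E) = -π^(p-1) := by linear_combination h4
  have hkeyO : (p : O) * (1 + (⟨π, hπO⟩ : O) * ⟨E, hEO⟩) = -(⟨π, hπO⟩ : O)^(p-1) := by
    apply Subtype.ext
    push_cast
    exact hkey
  have hdvdO : (p : O) ∣ (⟨π, hπO⟩ : O)^(p-1) :=
    ⟨-(1 + (⟨π, hπO⟩ : O) * ⟨E, hEO⟩), by rw [mul_neg, hkeyO, neg_neg]⟩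
  have hu1 : IsUnit ((1 : O) + (⟨π, hπO⟩ : O) * ⟨E, hEO⟩) := by
    have := isUnit_of_padic O f hf ⟨π, hπO⟩ hdvdO 1 isUnit_one ⟨E, hEO⟩
    simpa using this
  obtain ⟨w1, hw1⟩ := hu1.exists_right_inv
  have hw1K : (1 + π * E) * (w1 : K) = 1 := by
    have h5 := congrArg (Subtype.val) hw1
    push_cast at h5
    exact h5
  have hpfac : (p : K) = π^(p-1) * (-(w1 : K)) := by
    have h6 : (p:K) = (p:K) * ((1 + π*E) * (w1:K)) := by rw [hw1K, mul_one]
    rw [h6, ← mul_assoc, hkey]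
    ring
  -- binomial expansion of the Gauss sum
  have hgO2 : ∀ a : ℤ_[p], g a ∈ O := fun a => by rw [hgval]; exact hgO a
  have hbin : ∀ a : (ZMod p)ˣ, ζ ^ ((a : ZMod p)).val
      = ∑ j ∈ Finset.range p, (((a : ZMod p).val.choose j : K)) * π ^ j := by
    intro a
    have hn : (a : ZMod p).val < p := ZMod.val_lt _
    rw [show ζ = π + 1 from by rw [hπdef]; ring, add_pow]
    calc ∑ j ∈ Finset.range ((a : ZMod p).val + 1),
          π ^ j * 1 ^ ((a : ZMod p).val - j) * ((a : ZMod p).val.choose j : K)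
        = ∑ j ∈ Finset.range ((a : ZMod p).val + 1),
            (((a : ZMod p).val.choose j : K)) * π ^ j :=
          Finset.sum_congr rfl fun j _ => by rw [one_pow]; ring
      _ = ∑ j ∈ Finset.range p, (((a : ZMod p).val.choose j : K)) * π ^ j := by
          refine Finset.sum_subset (Finset.range_subset_range.mpr (by omega)) fun x _ hx => ?_
          have hlt : (a : ZMod p).val < x := by
            simp only [Finset.mem_range, not_lt] at hx; omega
          simp [Nat.choose_eq_zero_of_lt hlt]
  have hτ : (∑ a : (ZMod p)ˣ,
        algebraMap ℚ_[p] K ((((ω a)⁻¹ ^ k : ℤ_[p]ˣ) : ℤ_[p]) : ℚ_[p]) * ζ ^ ((a : ZMod p)).val)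
      = ∑ j ∈ Finset.range p, g (cc ω k j) * π ^ j := by
    have step1 : ∀ a : (ZMod p)ˣ,
        algebraMap ℚ_[p] K ((((ω a)⁻¹ ^ k : ℤ_[p]ˣ) : ℤ_[p]) : ℚ_[p]) * ζ ^ ((a : ZMod p)).val
        = ∑ j ∈ Finset.range p,
            g (((ω a)⁻¹ ^ k : ℤ_[p]ˣ) : ℤ_[p]) * ((((a : ZMod p).val.choose j : K)) * π ^ j) := by
      intro a
      rw [← hgval, hbin a, Finset.mul_sum]
    rw [Finset.sum_congr rfl fun a _ => step1 a, Finset.sum_comm]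
    refine Finset.sum_congr rfl fun j _ => ?_
    rw [cc, map_sum, Finset.sum_mul]
    refine Finset.sum_congr rfl fun a _ => ?_
    rw [map_mul, map_natCast]
    ring
  have hsplit : ∑ j ∈ Finset.range p, g (cc ω k j) * π ^ j
      = (∑ j ∈ Finset.range k, g (cc ω k j) * π ^ j) + g (cc ω k k) * π ^ k
        + ∑ j ∈ Finset.Ico (k+1) p, g (cc ω k j) * π ^ j := by
    rw [← Finset.sum_range_succ (fun j => g (cc ω k j) * π ^ j) k,
      Finset.sum_range_add_sum_Ico _ (show k+1 ≤ p from by omega)]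
  have hlow : ∃ b : K, b ∈ O ∧ (∑ j ∈ Finset.range k, g (cc ω k j) * π ^ j) = π^(k+1) * b := by
    refine Finset.sum_induction _ (fun x => ∃ b : K, b ∈ O ∧ x = π^(k+1) * b) ?_ ?_ ?_
    · intro x y hx hy
      obtain ⟨bx, hbx, ex⟩ := hx
      obtain ⟨by', hby, ey⟩ := hy
      exact ⟨bx + by', O.add_mem hbx hby, by rw [ex, ey]; ring⟩
    · exact ⟨0, O.zero_mem, by ring⟩
    · intro j hj
      obtain ⟨d, hd⟩ := cc_low_dvd ω hω k j (Finset.mem_range.mp hj) hk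
      refine ⟨(-(w1 : K) * g d) * π^(p-2-k+j),
        O.mul_mem (O.mul_mem (O.neg_mem w1.2) (hgO2 d)) (O.pow_mem hπO _), ?_⟩
      rw [hd, map_mul, map_natCast, hpfac]
      rw [show π^(k+1) * ((-(w1:K) * g d) * π^(p-2-k+j))
          = (π^(k+1) * π^(p-2-k+j)) * (-(w1:K) * g d) from by ring,
        ← pow_add, show (k+1) + (p-2-k+j) = (p-1) + j from by omega, pow_add]
      ring
  have hhigh : ∃ b : K, b ∈ O ∧
      (∑ j ∈ Finset.Ico (k+1) p, g (cc ω k j) * π ^ j) = π^(k+1) * b := by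
    refine Finset.sum_induction _ (fun x => ∃ b : K, b ∈ O ∧ x = π^(k+1) * b) ?_ ?_ ?_
    · intro x y hx hy
      obtain ⟨bx, hbx, ex⟩ := hx
      obtain ⟨by', hby, ey⟩ := hy
      exact ⟨bx + by', O.add_mem hbx hby, by rw [ex, ey]; ring⟩
    · exact ⟨0, O.zero_mem, by ring⟩
    · intro j hj
      have hj1 : k + 1 ≤ j := (Finset.mem_Ico.mp hj).1
      refine ⟨g (cc ω k j) * π^(j-(k+1)), O.mul_mem (hgO2 _) (O.pow_mem hπO _), ?_⟩
      rw [show π^(k+1) * (g (cc ω k j) * π^(j-(k+1)))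
          = (π^(k+1) * π^(j-(k+1))) * g (cc ω k j) from by ring,
        ← pow_add, show (k+1) + (j-(k+1)) = j from by omega]
      ring
  obtain ⟨b1, hb1, e1⟩ := hlow
  obtain ⟨b2, hb2, e2⟩ := hhigh
  have hwu : IsUnit (f (cc ω k k) + (⟨π, hπO⟩ : O) * ⟨b1 + b2, O.add_mem hb1 hb2⟩) :=
    isUnit_of_padic O f hf _ hdvdO _ (cc_diag_unit ω hω k hk) _
  refine ⟨hwu.unit, ?_⟩
  rw [IsUnit.unit_spec]
  have hcoe : ((f (cc ω k k) + (⟨π, hπO⟩ : O) * ⟨b1 + b2, O.add_mem hb1 hb2⟩ : O) : K)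
      = g (cc ω k k) + π * (b1 + b2) := rfl
  rw [hcoe, hτ, hsplit, e1, e2]
  ring
end

section
/- Let p ≥ 5 be prime and let 𝒥 be the ℤ[Δ]-module of Jacobi-sum homomorphisms, i.e., the intersection with Hom_{ℤ[Δ]}(ℐ, ℚ(ζ_p)*) of the ℤ[Δ]-module generated by the Gauss-sum map τ inside Hom_{ℤ[Δ]}(ℐ, Ω(ζ_p)*). Then as a ℤ-module, 𝒥 = 𝒩ℤ ⊕ ⊕_{n=1}^{(p−1)/2} j_{1,n}ℤ, where 𝒩 is the ideal norm map and j_{1,n} = τ^{1+σ_n−σ_{1+n}}; in particular 𝒥 is free of rank (p+1)/2 over ℤ. -/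
open Finset

namespace Stmt18Aux

variable {G : Type*} [CommGroup G]

def lastI {m : ℕ} (hm : 2 ≤ m) : Fin m := ⟨m - 1, by omega⟩

def Lmap {m : ℕ} (hm : 2 ≤ m) (d : ℤ × (Fin m → ℤ)) : ℤ × (Fin m → ℤ) :=
  (d.2 (lastI hm),
   fun k => (if (k : ℕ) = 0 then d.1 + d.2 (lastI hm)
       else d.2 ⟨(k : ℕ) - 1, lt_of_le_of_lt (Nat.sub_le _ _) k.isLt⟩)
     - d.2 k - (if k = lastI hm then d.2 (lastI hm) else 0))

def Cf {m : ℕ} (c : ℤ × (Fin m → ℤ)) (n : ℕ) : ℤ :=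
  if h : n < m then c.2 ⟨n, h⟩ else 0

def L'map {m : ℕ} (hm : 2 ≤ m) (c : ℤ × (Fin m → ℤ)) : ℤ × (Fin m → ℤ) :=
  (c.1 + ∑ n ∈ Finset.range m, Cf c n,
   fun i => if (i : ℕ) = m - 1 then c.1
     else 2 * c.1 + ∑ n ∈ Finset.Ico ((i : ℕ) + 1) m, Cf c n)

lemma L'2_eq {m : ℕ} (hm : 2 ≤ m) (c : ℤ × (Fin m → ℤ)) (k : Fin m) (h : (k : ℕ) ≠ m - 1) :
    (L'map hm c).2 k = 2 * c.1 + ∑ n ∈ Finset.Ico ((k : ℕ) + 1) m, Cf c n := by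
  simp [L'map, h]

lemma L'2_last {m : ℕ} (hm : 2 ≤ m) (c : ℤ × (Fin m → ℤ)) (k : Fin m) (h : (k : ℕ) = m - 1) :
    (L'map hm c).2 k = c.1 := by
  simp [L'map, h]

lemma Cf_lt {m : ℕ} (c : ℤ × (Fin m → ℤ)) (n : ℕ) (h : n < m) : Cf c n = c.2 ⟨n, h⟩ :=
  dif_pos h

lemma L_L' {m : ℕ} (hm : 2 ≤ m) (c : ℤ × (Fin m → ℤ)) : Lmap hm (L'map hm c) = c := by
  refine Prod.ext ?_ ?_
  · show (L'map hm c).2 (lastI hm) = c.1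
    exact L'2_last hm c _ rfl
  · funext k
    have hk : (k : ℕ) < m := k.isLt
    show (if (k : ℕ) = 0 then (L'map hm c).1 + (L'map hm c).2 (lastI hm)
        else (L'map hm c).2 ⟨(k : ℕ) - 1, lt_of_le_of_lt (Nat.sub_le _ _) k.isLt⟩)
      - (L'map hm c).2 k - (if k = lastI hm then (L'map hm c).2 (lastI hm) else 0) = c.2 k
    by_cases h0 : (k : ℕ) = 0
    · have hne : k ≠ lastI hm := by
        intro h; rw [h] at h0; simp [lastI] at h0; omega
      rw [if_pos h0, if_neg hne, L'2_last hm c (lastI hm) rfl,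
        L'2_eq hm c k (by omega)]
      show c.1 + ∑ n ∈ Finset.range m, Cf c n + c.1
        - (2 * c.1 + ∑ n ∈ Finset.Ico ((k : ℕ) + 1) m, Cf c n) - 0 = c.2 k
      rw [h0, range_eq_Ico, Finset.sum_eq_sum_Ico_succ_bot (show 0 < m by omega)]
      rw [Cf_lt c 0 (by omega)]
      have : (⟨0, by omega⟩ : Fin m) = k := Fin.ext (by show 0 = (k : ℕ); omega)
      rw [this]; ring
    · rw [if_neg h0]
      by_cases hl : k = lastI hm
      · have hkv : (k : ℕ) = m - 1 := by rw [hl]; rfl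
        rw [if_pos hl, L'2_last hm c k hkv, L'2_last hm c (lastI hm) rfl,
          L'2_eq hm c ⟨(k : ℕ) - 1, lt_of_le_of_lt (Nat.sub_le _ _) k.isLt⟩
            (by show (k : ℕ) - 1 ≠ m - 1; omega)]
        show 2 * c.1 + ∑ n ∈ Finset.Ico ((k : ℕ) - 1 + 1) m, Cf c n - c.1 - c.1 = c.2 k
        have h1 : (k : ℕ) - 1 + 1 = m - 1 := by omega
        rw [h1, Finset.sum_eq_sum_Ico_succ_bot (show m - 1 < m by omega),
          show m - 1 + 1 = m from by omega, Finset.Ico_self, Finset.sum_empty,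
          Cf_lt c (m - 1) (by omega)]
        have : (⟨m - 1, by omega⟩ : Fin m) = k := Fin.ext (by show m - 1 = (k : ℕ); omega)
        rw [this]; ring
      · have hkv : (k : ℕ) ≠ m - 1 := fun h => hl (Fin.ext (by simp [lastI, h]))
        rw [if_neg hl, L'2_eq hm c k hkv,
          L'2_eq hm c ⟨(k : ℕ) - 1, lt_of_le_of_lt (Nat.sub_le _ _) k.isLt⟩
            (by show (k : ℕ) - 1 ≠ m - 1; omega)]
        show 2 * c.1 + ∑ n ∈ Finset.Ico ((k : ℕ) - 1 + 1) m, Cf c n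
          - (2 * c.1 + ∑ n ∈ Finset.Ico ((k : ℕ) + 1) m, Cf c n) - 0 = c.2 k
        have h1 : (k : ℕ) - 1 + 1 = (k : ℕ) := by omega
        rw [h1, Finset.sum_eq_sum_Ico_succ_bot (show (k : ℕ) < m from hk),
          Cf_lt c (k : ℕ) hk, Fin.eta]
        ring


lemma L'_L {m : ℕ} (hm : 2 ≤ m) (d : ℤ × (Fin m → ℤ)) : L'map hm (Lmap hm d) = d := by
  have hE : ∀ n, ∀ h : n < m, Cf (Lmap hm d) n
      = (if n = 0 then d.1 + Cf d (m - 1) else Cf d (n - 1)) - Cf d n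
        - (if n = m - 1 then Cf d (m - 1) else 0) := by
    intro n h
    rw [Cf_lt _ n h]
    simp only [Lmap, Fin.ext_iff, lastI]
    rw [Cf_lt d n h, Cf_lt d (n - 1) (by omega), Cf_lt d (m - 1) (by omega)]
  have hL1 : (Lmap hm d).1 = Cf d (m - 1) := (Cf_lt d (m - 1) (by omega)).symm
  have hmem : m - 1 ∈ Finset.Ico 1 m := Finset.mem_Ico.mpr ⟨by omega, by omega⟩
  refine Prod.ext ?_ ?_
  · show (Lmap hm d).1 + ∑ n ∈ Finset.range m, Cf (Lmap hm d) n = d.1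
    have hcong : ∀ n ∈ Finset.Ico 1 m, Cf (Lmap hm d) n
        = (Cf d (n - 1) - Cf d n) - (if n = m - 1 then Cf d (m - 1) else 0) := by
      intro n hn
      rw [Finset.mem_Ico] at hn
      rw [hE n hn.2, if_neg (by omega)]
    have htel : ∑ n ∈ Finset.Ico 1 m, (Cf d (n - 1) - Cf d n)
        = Cf d 0 - Cf d (m - 1) := by
      rw [Finset.sum_Ico_eq_sum_range]
      rw [Finset.sum_congr rfl (fun j _ => by
        rw [show 1 + j - 1 = j from by omega, show 1 + j = j + 1 from by omega])]
      exact Finset.sum_range_sub' (fun j => Cf d j) (m - 1)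
    rw [range_eq_Ico, Finset.sum_eq_sum_Ico_succ_bot (show 0 < m by omega),
      hE 0 (by omega), if_pos rfl, if_neg (by omega),
      Finset.sum_congr rfl hcong, Finset.sum_sub_distrib, htel,
      Finset.sum_ite_eq' (Finset.Ico 1 m) (m - 1) (fun _ => Cf d (m - 1)),
      if_pos hmem, hL1]
    ring
  · funext i
    by_cases hil : (i : ℕ) = m - 1
    · rw [L'2_last hm _ i hil]
      show d.2 (lastI hm) = d.2 i
      have hli : lastI hm = i := by
        refine Fin.ext ?_
        exact hil.symm
      rw [hli]
    · rw [L'2_eq hm _ i hil]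
      have hcong : ∀ n ∈ Finset.Ico ((i : ℕ) + 1) m, Cf (Lmap hm d) n
          = (Cf d (n - 1) - Cf d n) - (if n = m - 1 then Cf d (m - 1) else 0) := by
        intro n hn
        rw [Finset.mem_Ico] at hn
        rw [hE n hn.2, if_neg (by omega)]
      have htel : ∑ n ∈ Finset.Ico ((i : ℕ) + 1) m, (Cf d (n - 1) - Cf d n)
          = Cf d (i : ℕ) - Cf d (m - 1) := by
        rw [Finset.sum_Ico_eq_sum_range]
        rw [Finset.sum_congr rfl (fun j _ => by
          rw [show (i : ℕ) + 1 + j - 1 = (i : ℕ) + j from by omega,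
            show (i : ℕ) + 1 + j = (i : ℕ) + (j + 1) from by omega])]
        rw [Finset.sum_range_sub' (fun j => Cf d ((i : ℕ) + j))]
        rw [show (i : ℕ) + (m - ((i : ℕ) + 1)) = m - 1 from by
          have := i.isLt; omega, show (i : ℕ) + 0 = (i : ℕ) from by omega]
      have hmem2 : m - 1 ∈ Finset.Ico ((i : ℕ) + 1) m := by
        have := i.isLt; exact Finset.mem_Ico.mpr ⟨by omega, by omega⟩
      rw [Finset.sum_congr rfl hcong, Finset.sum_sub_distrib, htel,
        Finset.sum_ite_eq' _ (m - 1) (fun _ => Cf d (m - 1)), if_pos hmem2, hL1,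
        Cf_lt d (i : ℕ) i.isLt, Fin.eta]
      ring

def mkH {m : ℕ} (g0 : G) (gs : Fin m → G) : (ℤ × (Fin m → ℤ)) →+ Additive G where
  toFun c := Additive.ofMul (g0 ^ c.1 * ∏ i, gs i ^ c.2 i)
  map_zero' := by simp
  map_add' c c' := by
    have h : g0 ^ (c + c').1 * ∏ i, gs i ^ (c + c').2 i
        = (g0 ^ c.1 * ∏ i, gs i ^ c.2 i) * (g0 ^ c'.1 * ∏ i, gs i ^ c'.2 i) := by
      simp only [Prod.fst_add, Prod.snd_add, Pi.add_apply, zpow_add,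
        Finset.prod_mul_distrib]
      exact mul_mul_mul_comm _ _ _ _
    simp only [h, ofMul_mul]

lemma mkH_apply {m : ℕ} (g0 : G) (gs : Fin m → G) (c : ℤ × (Fin m → ℤ)) :
    mkH g0 gs c = Additive.ofMul (g0 ^ c.1 * ∏ i, gs i ^ c.2 i) := rfl

lemma hom_key {m : ℕ} {A : Type*} [AddCommGroup A] (φ : (ℤ × (Fin m → ℤ)) →+ A)
    (c : ℤ × (Fin m → ℤ)) :
    φ c = c.1 • φ (1, 0) + ∑ i : Fin m, c.2 i • φ (0, Pi.single i 1) := by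
  have hsplit : c = (c.1, 0) + (0, c.2) := by
    refine Prod.ext ?_ ?_ <;> simp
  conv_lhs => rw [hsplit]
  rw [map_add]
  congr 1
  · rw [← map_zsmul]
    congr 1
    refine Prod.ext ?_ ?_ <;> simp
  · have h2 : ((0 : ℤ), c.2) = ∑ i : Fin m, c.2 i • ((0 : ℤ), Pi.single i (1 : ℤ)) := by
      refine Prod.ext ?_ ?_
      · rw [Prod.fst_sum]
        simp
      · rw [Prod.snd_sum]
        funext x
        rw [Finset.sum_apply]
        simp [Pi.single_apply, mul_ite, Finset.sum_ite_eq]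
    rw [h2, map_sum]
    exact Finset.sum_congr rfl (fun i _ => by rw [map_zsmul])

lemma hom_ext {m : ℕ} {A : Type*} [AddCommGroup A] (φ ψ : (ℤ × (Fin m → ℤ)) →+ A)
    (h1 : φ (1, 0) = ψ (1, 0))
    (h2 : ∀ i : Fin m, φ (0, Pi.single i 1) = ψ (0, Pi.single i 1)) : φ = ψ := by
  ext c
  rw [hom_key φ c, hom_key ψ c, h1]
  congr 1
  exact Finset.sum_congr rfl (fun i _ => by rw [h2 i])


def Lhom {m : ℕ} (hm : 2 ≤ m) : (ℤ × (Fin m → ℤ)) →+ (ℤ × (Fin m → ℤ)) where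
  toFun := Lmap hm
  map_zero' := by
    refine Prod.ext ?_ ?_
    · simp [Lmap]
    · funext k
      simp [Lmap]
  map_add' d e := by
    refine Prod.ext ?_ ?_
    · simp [Lmap]
    · funext k
      simp only [Lmap, Prod.fst_add, Prod.snd_add, Pi.add_apply]
      split_ifs <;> ring

lemma Lhom_apply {m : ℕ} (hm : 2 ≤ m) (d : ℤ × (Fin m → ℤ)) : Lhom hm d = Lmap hm d := rfl

lemma prod_single_exp {m : ℕ} (b : Fin m → G) (a : Fin m) (x : ℤ) :
    ∏ k : Fin m, b k ^ (if (k : ℕ) = (a : ℕ) then x else 0) = b a ^ x := by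
  have h := Fintype.prod_eq_single (f := fun k : Fin m => b k ^ (if (k : ℕ) = (a : ℕ) then x else 0))
    a (fun k hk => by
      show b k ^ (if (k : ℕ) = (a : ℕ) then x else 0) = 1
      rw [if_neg (fun h => hk (Fin.ext h)), zpow_zero])
  rw [h]
  show b a ^ (if (a : ℕ) = (a : ℕ) then x else 0) = b a ^ x
  rw [if_pos rfl]

lemma key_eq {m : ℕ} (hm : 2 ≤ m) (b0 NN : G) (b jj : Fin m → G)
    (hNN : NN = b ⟨0, by omega⟩)
    (hjj : ∀ (i : Fin m) (h : (i : ℕ) + 1 < m), jj i = (b i)⁻¹ * b ⟨(i : ℕ) + 1, h⟩)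
    (hjl : jj (lastI hm) = b0 * b ⟨0, by omega⟩ * (b (lastI hm)) ^ (-2 : ℤ)) :
    ∀ d : ℤ × (Fin m → ℤ), NN ^ d.1 * ∏ i, jj i ^ d.2 i
      = b0 ^ (Lmap hm d).1 * ∏ i, b i ^ (Lmap hm d).2 i := by
  have main : mkH NN jj = (mkH b0 b).comp (Lhom hm) := by
    refine hom_ext _ _ ?_ ?_
    · rw [AddMonoidHom.comp_apply, Lhom_apply]
      have hL1 : Lmap hm ((1 : ℤ), (0 : Fin m → ℤ))
          = ((0 : ℤ), fun k : Fin m => if (k : ℕ) = ((⟨0, by omega⟩ : Fin m) : ℕ) then (1 : ℤ) else 0) := by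
        refine Prod.ext ?_ ?_
        · simp [Lmap]
        · funext k
          simp [Lmap]
      rw [hL1]
      show Additive.ofMul (NN ^ (1 : ℤ) * ∏ i, jj i ^ (0 : Fin m → ℤ) i)
        = Additive.ofMul (b0 ^ (0 : ℤ) * ∏ k : Fin m,
            b k ^ (if (k : ℕ) = ((⟨0, by omega⟩ : Fin m) : ℕ) then (1 : ℤ) else 0))
      congr 1
      rw [prod_single_exp b ⟨0, by omega⟩ 1]
      simp [hNN]
    · intro i
      rw [AddMonoidHom.comp_apply, Lhom_apply]
      have hi := i.isLt
      have hlhs : ∏ k, jj k ^ (Pi.single i (1:ℤ) : Fin m → ℤ) k = jj i := by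
        have h := Fintype.prod_eq_single
          (f := fun k : Fin m => jj k ^ (Pi.single i (1:ℤ) : Fin m → ℤ) k) i
          (fun k hk => by
            show jj k ^ (Pi.single i (1:ℤ) : Fin m → ℤ) k = 1
            rw [Pi.single_eq_of_ne hk, zpow_zero])
        rw [h]
        show jj i ^ (Pi.single i (1:ℤ) : Fin m → ℤ) i = jj i
        rw [Pi.single_eq_same, zpow_one]
      by_cases hcase : (i : ℕ) + 1 < m
      · have hL : Lmap hm ((0:ℤ), (Pi.single i (1:ℤ) : Fin m → ℤ))
            = ((0:ℤ), fun k : Fin m =>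
                (if (k : ℕ) = ((⟨(i:ℕ)+1, hcase⟩ : Fin m) : ℕ) then (1:ℤ) else 0)
              + (if (k : ℕ) = (i : ℕ) then (-1:ℤ) else 0)) := by
          refine Prod.ext ?_ ?_
          · show (Pi.single i (1:ℤ) : Fin m → ℤ) (lastI hm) = 0
            refine Pi.single_eq_of_ne ?_ 1
            intro hx
            have := congrArg Fin.val hx
            simp [lastI] at this
            omega
          · funext k
            have hk := k.isLt
            simp only [Lmap, Pi.single_apply, Fin.ext_iff, Fin.val_mk, lastI]
            split_ifs <;> omega
        rw [hL]
        have hsplit : ∏ k : Fin m, b k ^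
              ((if (k : ℕ) = ((⟨(i:ℕ)+1, hcase⟩ : Fin m) : ℕ) then (1:ℤ) else 0)
              + (if (k : ℕ) = (i : ℕ) then (-1:ℤ) else 0))
            = b ⟨(i:ℕ)+1, hcase⟩ ^ (1:ℤ) * b i ^ (-1:ℤ) := by
          simp only [zpow_add, Finset.prod_mul_distrib]
          rw [prod_single_exp b ⟨(i:ℕ)+1, hcase⟩ 1, prod_single_exp b i (-1)]
        show Additive.ofMul (NN ^ (0:ℤ) * ∏ k, jj k ^ (Pi.single i (1:ℤ) : Fin m → ℤ) k)
          = Additive.ofMul (b0 ^ (0:ℤ) * ∏ k : Fin m, b k ^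
              ((if (k : ℕ) = ((⟨(i:ℕ)+1, hcase⟩ : Fin m) : ℕ) then (1:ℤ) else 0)
              + (if (k : ℕ) = (i : ℕ) then (-1:ℤ) else 0)))
        congr 1
        rw [hsplit, hlhs, hjj i hcase, zpow_zero, zpow_zero, one_mul, one_mul,
          zpow_one, zpow_neg_one, mul_comm]
      · have hieq : i = lastI hm := Fin.ext (by simp [lastI]; omega)
        subst hieq
        have hL : Lmap hm ((0:ℤ), (Pi.single (lastI hm) (1:ℤ) : Fin m → ℤ))
            = ((1:ℤ), fun k : Fin m =>
                (if (k : ℕ) = ((⟨0, by omega⟩ : Fin m) : ℕ) then (1:ℤ) else 0)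
              + (if (k : ℕ) = ((lastI hm : Fin m) : ℕ) then (-2:ℤ) else 0)) := by
          refine Prod.ext ?_ ?_
          · show (Pi.single (lastI hm) (1:ℤ) : Fin m → ℤ) (lastI hm) = 1
            exact Pi.single_eq_same _ _
          · funext k
            have hk := k.isLt
            simp only [Lmap, Pi.single_apply, Fin.ext_iff, Fin.val_mk, lastI]
            split_ifs <;> omega
        rw [hL]
        have hsplit : ∏ k : Fin m, b k ^
              ((if (k : ℕ) = ((⟨0, by omega⟩ : Fin m) : ℕ) then (1:ℤ) else 0)
              + (if (k : ℕ) = ((lastI hm : Fin m) : ℕ) then (-2:ℤ) else 0))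
            = b ⟨0, by omega⟩ ^ (1:ℤ) * b (lastI hm) ^ (-2:ℤ) := by
          simp only [zpow_add, Finset.prod_mul_distrib]
          rw [prod_single_exp b ⟨0, by omega⟩ 1, prod_single_exp b (lastI hm) (-2)]
        show Additive.ofMul (NN ^ (0:ℤ) *
              ∏ k, jj k ^ (Pi.single (lastI hm) (1:ℤ) : Fin m → ℤ) k)
          = Additive.ofMul (b0 ^ (1:ℤ) * ∏ k : Fin m, b k ^
              ((if (k : ℕ) = ((⟨0, by omega⟩ : Fin m) : ℕ) then (1:ℤ) else 0)
              + (if (k : ℕ) = ((lastI hm : Fin m) : ℕ) then (-2:ℤ) else 0)))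
        congr 1
        rw [hsplit, hlhs, hjl, zpow_zero, one_mul, zpow_one, zpow_one, mul_assoc]
  intro d
  have h := DFunLike.congr_fun main d
  rw [mkH_apply, AddMonoidHom.comp_apply, mkH_apply, Lhom_apply] at h
  exact Additive.ofMul.injective h

theorem basis_change {m : ℕ} (hm : 2 ≤ m) (b0 NN : G) (b jj : Fin m → G)
    (hNN : NN = b ⟨0, by omega⟩)
    (hjj : ∀ (i : Fin m) (h : (i : ℕ) + 1 < m), jj i = (b i)⁻¹ * b ⟨(i : ℕ) + 1, h⟩)
    (hjl : jj (lastI hm) = b0 * b ⟨0, by omega⟩ * (b (lastI hm)) ^ (-2 : ℤ))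
    (g : G) :
    (∃! c : ℤ × (Fin m → ℤ), g = b0 ^ c.1 * ∏ i, b i ^ c.2 i) ↔
    (∃! d : ℤ × (Fin m → ℤ), g = NN ^ d.1 * ∏ i, jj i ^ d.2 i) := by
  have hFL := key_eq (G := G) hm b0 NN b jj hNN hjj hjl
  constructor
  · rintro ⟨c, hc, hu⟩
    refine ⟨L'map hm c, ?_, ?_⟩
    · show g = NN ^ (L'map hm c).1 * ∏ i, jj i ^ (L'map hm c).2 i
      rw [hFL (L'map hm c), L_L' hm c]
      exact hc
    · intro d' hd'
      have hd2 : g = NN ^ d'.1 * ∏ i, jj i ^ d'.2 i := hd'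
      rw [hFL d'] at hd2
      have h1 : Lmap hm d' = c := hu (Lmap hm d') hd2
      rw [← h1, L'_L hm d']
  · rintro ⟨d, hd, hu⟩
    refine ⟨Lmap hm d, ?_, ?_⟩
    · show g = b0 ^ (Lmap hm d).1 * ∏ i, b i ^ (Lmap hm d).2 i
      rw [← hFL d]
      exact hd
    · intro c' hc'
      have hc2 : g = b0 ^ c'.1 * ∏ i, b i ^ c'.2 i := hc'
      have h2 : g = NN ^ (L'map hm c').1 * ∏ i, jj i ^ (L'map hm c').2 i := by
        rw [hFL (L'map hm c'), L_L' hm c']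
        exact hc2
      have h3 : L'map hm c' = d := hu (L'map hm c') h2
      rw [← h3, L_L' hm c']

end Stmt18Aux

/-- Let `p ≥ 5` be prime.  We model the ambient group `Hom_{ℤ[Δ]}(ℐ, Ω(ζ_p)*)`
by an abstract commutative group `G` with an action of `Δ = (ℤ/pℤ)*` by
automorphisms, containing the Gauss-sum map `τ` (with `τ_a = σ_a·τ`, extended
by `τ_x = 1` for `x` not a unit) and the norm map `N`, subject to the known
relations `τ_a·τ_{−a} = 𝒩` and Iwasawa's decomposition
`𝒥 = τ^pℤ ⊕ ⊕_{a=1}^{(p−1)/2} τ_{−a}τ^a ℤ` of the module `𝒥` of Jacobi-sum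
homomorphisms.  Then, with `j_{1,n} = τ^{1+σ_n−σ_{1+n}} = τ·τ_n·τ_{n+1}⁻¹`,
one has `𝒥 = 𝒩ℤ ⊕ ⊕_{n=1}^{(p−1)/2} j_{1,n}ℤ`: every element of `𝒥` is
uniquely `𝒩^{c_0}·Π_{n=1}^{(p−1)/2} j_{1,n}^{c_n}` with integer exponents; in
particular `𝒥` is free of rank `(p+1)/2` over `ℤ`. -/
theorem stmt_18 (p : ℕ) (hp : p.Prime) (hp5 : 5 ≤ p)
    (G : Type*) [CommGroup G] (σ : (ZMod p)ˣ →* MulAut G)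
    (τ N : G)
    (τa : ZMod p → G)
    (hτa : ∀ x : ZMod p, ∀ h : IsUnit x, τa x = σ h.unit τ)
    (hτa0 : ∀ x : ZMod p, ¬ IsUnit x → τa x = 1)
    (hN : ∀ x : ZMod p, IsUnit x → τa x * τa (-x) = N)
    (J : Subgroup G)
    (hJ : J = Subgroup.closure
      ({τ ^ p} ∪ Set.range (fun i : Fin ((p - 1) / 2) =>
        τa (-(((i : ℕ) + 1 : ℕ) : ZMod p)) * τ ^ ((i : ℕ) + 1))))
    (hfree : ∀ g ∈ J, ∃! c : ℤ × (Fin ((p - 1) / 2) → ℤ),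
      g = (τ ^ p) ^ c.1 * ∏ i : Fin ((p - 1) / 2),
        (τa (-(((i : ℕ) + 1 : ℕ) : ZMod p)) * τ ^ ((i : ℕ) + 1)) ^ (c.2 i))
    (j : ℕ → G)
    (hj : ∀ n : ℕ, j n = τa 1 * τa ((n : ZMod p)) * (τa ((n : ZMod p) + 1))⁻¹) :
    ∀ g : G, g ∈ J ↔ ∃! c : ℤ × (Fin ((p - 1) / 2) → ℤ),
      g = N ^ c.1 * ∏ i : Fin ((p - 1) / 2), (j ((i : ℕ) + 1)) ^ (c.2 i) := by
  intro g
  haveI : Fact p.Prime := ⟨hp⟩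
  set m := (p - 1) / 2 with hmdef
  have hm2 : 2 ≤ m := by omega
  have hp2m : p = 2 * m + 1 := by
    obtain ⟨k, hk⟩ := hp.odd_of_ne_two (by omega)
    omega
  have hunit : ∀ n : ℕ, 1 ≤ n → n < p → IsUnit ((n : ZMod p)) := by
    intro n h1 h2
    rw [isUnit_iff_ne_zero]
    intro h0
    rw [ZMod.natCast_eq_zero_iff] at h0
    have := Nat.le_of_dvd (by omega) h0
    omega
  have hτ1 : τa 1 = τ := by
    have h1 : (isUnit_one : IsUnit (1 : ZMod p)).unit = 1 := Units.ext (by simp)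
    rw [hτa 1 isUnit_one, h1, map_one]
    rfl
  have hNeg : ∀ x : ZMod p, IsUnit x → τa x = N * (τa (-x))⁻¹ := by
    intro x h
    rw [← hN x h]
    exact (mul_inv_cancel_right _ _).symm
  have hNval : N = τa (-((1 : ℕ) : ZMod p)) * τ ^ 1 := by
    rw [pow_one, Nat.cast_one, ← hN 1 isUnit_one, hτ1, mul_comm]
  have hNN : N = (fun i : Fin m => τa (-(((i : ℕ) + 1 : ℕ) : ZMod p)) * τ ^ ((i : ℕ) + 1))
      (⟨0, by omega⟩ : Fin m) := hNval
  have hjj : ∀ (i : Fin m) (h : (i : ℕ) + 1 < m),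
      (fun i : Fin m => j ((i : ℕ) + 1)) i
        = ((fun i : Fin m => τa (-(((i : ℕ) + 1 : ℕ) : ZMod p)) * τ ^ ((i : ℕ) + 1)) i)⁻¹
          * (fun i : Fin m => τa (-(((i : ℕ) + 1 : ℕ) : ZMod p)) * τ ^ ((i : ℕ) + 1))
            ⟨(i : ℕ) + 1, h⟩ := by
    intro i h
    show j ((i : ℕ) + 1)
      = (τa (-((((i : ℕ) + 1 : ℕ)) : ZMod p)) * τ ^ ((i : ℕ) + 1))⁻¹
        * (τa (-((((i : ℕ) + 1 + 1 : ℕ)) : ZMod p)) * τ ^ ((i : ℕ) + 1 + 1))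
    have hn1 : IsUnit ((((i : ℕ) + 1 : ℕ)) : ZMod p) := hunit _ (by omega) (by omega)
    have hn2 : IsUnit ((((i : ℕ) + 1 + 1 : ℕ)) : ZMod p) := hunit _ (by omega) (by omega)
    rw [hj ((i : ℕ) + 1), hτ1]
    have hc : ((((i : ℕ) + 1 : ℕ)) : ZMod p) + 1 = (((i : ℕ) + 1 + 1 : ℕ) : ZMod p) := by
      push_cast
      ring
    rw [hc, hNeg _ hn1, hNeg _ hn2, pow_succ τ ((i : ℕ) + 1)]
    apply Additive.ofMul.injective
    generalize τ ^ ((i : ℕ) + 1) = T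
    simp only [ofMul_mul, ofMul_inv]
    abel
  have hjl : (fun i : Fin m => j ((i : ℕ) + 1)) (Stmt18Aux.lastI hm2)
      = τ ^ p * (fun i : Fin m => τa (-(((i : ℕ) + 1 : ℕ) : ZMod p)) * τ ^ ((i : ℕ) + 1))
          (⟨0, by omega⟩ : Fin m)
        * ((fun i : Fin m => τa (-(((i : ℕ) + 1 : ℕ) : ZMod p)) * τ ^ ((i : ℕ) + 1))
            (Stmt18Aux.lastI hm2)) ^ (-2 : ℤ) := by
    show j (m - 1 + 1)
      = τ ^ p * (τa (-((1 : ℕ) : ZMod p)) * τ ^ 1)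
        * (τa (-(((m - 1 + 1 : ℕ)) : ZMod p)) * τ ^ (m - 1 + 1)) ^ (-2 : ℤ)
    rw [show m - 1 + 1 = m from by omega]
    have hum : IsUnit (((m : ℕ)) : ZMod p) := hunit m (by omega) (by omega)
    rw [hj m, hτ1]
    have hc2 : ((m : ℕ) : ZMod p) + 1 = -(((m : ℕ)) : ZMod p) := by
      have hp0 : ((2 * m + 1 : ℕ) : ZMod p) = 0 := by
        rw [← hp2m]
        exact ZMod.natCast_self p
      push_cast at hp0 ⊢
      linear_combination hp0
    have hτp : τ ^ p = (τ ^ m) ^ 2 * τ := by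
      rw [show p = m * 2 + 1 from by omega, pow_succ, pow_mul]
    rw [hc2, hNeg _ hum, hNval, pow_one, hτp]
    apply Additive.ofMul.injective
    generalize τ ^ m = T
    simp only [ofMul_mul, ofMul_inv, ofMul_zpow, ofMul_pow]
    abel
  have hiff := Stmt18Aux.basis_change (G := G) hm2 (τ ^ p) N
    (fun i : Fin m => τa (-(((i : ℕ) + 1 : ℕ) : ZMod p)) * τ ^ ((i : ℕ) + 1))
    (fun i : Fin m => j ((i : ℕ) + 1)) hNN hjj hjl g
  constructor
  · intro hg
    exact hiff.mp (hfree g hg)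
  · intro hd
    obtain ⟨c, hc, -⟩ := hiff.mpr hd
    have hc' : g = (τ ^ p) ^ c.1 * ∏ i : Fin m,
        (τa (-(((i : ℕ) + 1 : ℕ) : ZMod p)) * τ ^ ((i : ℕ) + 1)) ^ (c.2 i) := hc
    rw [hJ, hc']
    refine mul_mem (zpow_mem (Subgroup.subset_closure ?_) _)
      (prod_mem fun i _ => zpow_mem (Subgroup.subset_closure ?_) _)
    · exact Set.mem_union_left _ rfl
    · exact Set.mem_union_right _ ⟨i, rfl⟩
end
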